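/- arXiv:1301.6327 — 2 statements merged into one kernel-verified Lean document; each statement's English description precedes it below -/
import Mathlib

section
/- The exponential generating function of the sequence p_n (the number of permutations of [n] all of whose left-to-right minima occur at odd positions, with p_0 = 1) is ∑_{n≥0} p_n x^n/n! = √((1+x)/(1-x)), as an identity of formal power series (equivalently, the square of the EGF equals (1+x)/(1-x) where 1/(1-x) = ∑ x^n). -/
/-!
Appending a value `v` to a permutation of `[n]` (shifting up the values `≥ v`) is a bijection
`Perm [n] × [n+1] ≃ Perm [n+1]`. It keeps the left-to-right minima among the first `n`
positions, and the new last position is one exactly when `v` is the smallest value. Hence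
`p_{n+1} = (n+1) p_n` for even `n` and `p_{n+1} = n p_n` for odd `n`, which says that the EGF `f`
solves `(1 - x²) f' = f`. Then `u = f² (1 - x)` solves `(1 + x) u' = u` with `u(0) = 1`, as
does `1 + x`; linear first-order differential equations have unique power series solutions, so
`f² (1 - x) = 1 + x`.
-/

def lrmOddPerm (n : ℕ) (a : Equiv.Perm (Fin n)) : Prop :=
  ∀ i : Fin n, (∀ j : Fin n, j ≤ i → a i ≤ a j) → Odd (i.val + 1)

/-- The number of permutations of `[n]` all of whose left-to-right minima
occur at odd positions (so `permCount 0 = 1`). -/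
noncomputable def permCount (n : ℕ) : ℕ :=
  Nat.card {a : Equiv.Perm (Fin n) // lrmOddPerm n a}

/-- The exponential generating function `∑ pₙ xⁿ/n!` of `permCount`. -/
noncomputable def egfP : PowerSeries ℚ :=
  PowerSeries.mk fun n => (permCount n : ℚ) / n.factorial

open Equiv

def IsLeftToRightMin {n : ℕ} {α : Type*} [Preorder α] (a : Fin n → α) (i : Fin n) : Prop :=
  ∀ j ≤ i, a i ≤ a j

def insertLast {n : ℕ} (b : Perm (Fin n)) (v : Fin (n + 1)) : Perm (Fin (n + 1)) :=
  (finSuccEquiv' (Fin.last n)).trans (b.optionCongr.trans (finSuccEquiv' v).symm)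

lemma lrmOddPerm_iff {n : ℕ} (a : Perm (Fin n)) :
    lrmOddPerm n a ↔ ∀ i, IsLeftToRightMin a i → Odd (i.val + 1) :=
  Iff.rfl

section insertLast

variable {n : ℕ} (b : Perm (Fin n)) (v : Fin (n + 1))

@[simp] lemma insertLast_last : insertLast b v (Fin.last n) = v := by
  simp [insertLast, finSuccEquiv'_symm_none]

@[simp] lemma insertLast_castSucc (i : Fin n) :
    insertLast b v i.castSucc = v.succAbove (b i) := by
  have h : finSuccEquiv' (Fin.last n) i.castSucc = some i := by
    rw [← Fin.succAbove_last, finSuccEquiv'_succAbove]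
  simp [insertLast, h, finSuccEquiv'_symm_some]

lemma isLeftToRightMin_insertLast_castSucc_iff (i : Fin n) :
    IsLeftToRightMin (insertLast b v) i.castSucc ↔ IsLeftToRightMin b i := by
  refine ⟨fun h j hj => ?_, fun h j hj => ?_⟩
  · simpa using h j.castSucc (Fin.castSucc_le_castSucc_iff.mpr hj)
  · induction j using Fin.lastCases with
    | last => exact absurd hj (Fin.castSucc_lt_last i).not_ge
    | cast j => simpa using h j (Fin.castSucc_le_castSucc_iff.mp hj)

lemma isLeftToRightMin_insertLast_last_iff :
    IsLeftToRightMin (insertLast b v) (Fin.last n) ↔ v = 0 := by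
  refine ⟨fun h => ?_, fun h j _ => by simp [h]⟩
  simpa using h ((insertLast b v).symm 0) (Fin.le_last _)

lemma lrmOddPerm_insertLast_iff :
    lrmOddPerm (n + 1) (insertLast b v) ↔ lrmOddPerm n b ∧ (v = 0 → Even n) := by
  simp only [lrmOddPerm_iff, Fin.forall_fin_succ', Fin.val_castSucc, Fin.val_last,
    isLeftToRightMin_insertLast_castSucc_iff, isLeftToRightMin_insertLast_last_iff,
    Nat.odd_add_one, Nat.not_odd_iff_even]

end insertLast

lemma insertLast_bijective (n : ℕ) :
    Function.Bijective (fun p : Perm (Fin n) × Fin (n + 1) => insertLast p.1 p.2) := by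
  refine (Fintype.bijective_iff_injective_and_card _).mpr ⟨?_, ?_⟩
  · rintro ⟨b, v⟩ ⟨b', v'⟩ h
    obtain rfl : v = v' := by simpa using congr($h (Fin.last n))
    obtain rfl : b = b' := Equiv.ext fun i =>
      Fin.succAbove_right_injective (p := v) (by simpa using congr($h i.castSucc))
    rfl
  · simp [Fintype.card_perm, Nat.factorial_succ, mul_comm]

lemma Fin.card_subtype_eq_zero_imp (n : ℕ) (P : Prop) [Decidable P] :
    Nat.card {v : Fin (n + 1) // v = 0 → P} = if P then n + 1 else n := by
  split_ifs with hP
  · simp [hP]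
  · simp [hP, Nat.card_eq_fintype_card, Fintype.card_subtype_compl]

theorem permCount_succ (n : ℕ) :
    permCount (n + 1) = (if Even n then n + 1 else n) * permCount n := by
  let e : {p : Perm (Fin n) × Fin (n + 1) // lrmOddPerm n p.1 ∧ (p.2 = 0 → Even n)} ≃
      {a // lrmOddPerm (n + 1) a} :=
    (Equiv.ofBijective _ (insertLast_bijective n)).subtypeEquiv
      fun p => (lrmOddPerm_insertLast_iff p.1 p.2).symm
  rw [permCount, ← Nat.card_congr e, Nat.card_congr (Equiv.subtypeProdEquivProd
      (p := lrmOddPerm n) (q := fun v : Fin (n + 1) => v = 0 → Even n)),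
    Nat.card_prod, Fin.card_subtype_eq_zero_imp, mul_comm]
  rfl

theorem permCount_zero : permCount 0 = 1 := by
  rw [permCount, Nat.card_congr (Equiv.subtypeUnivEquiv
    (p := lrmOddPerm 0) fun _ i => i.elim0)]
  simp

open PowerSeries

theorem PowerSeries.eq_of_derivative_eq_mul {R : Type*} [CommRing R] [IsAddTorsionFree R]
    {g u v : R⟦X⟧} (hu : d⁄dX R u = g * u) (hv : d⁄dX R v = g * v)
    (h₀ : constantCoeff u = constantCoeff v) : u = v := by
  rw [← sub_eq_zero]
  set w := u - v
  have hw : d⁄dX R w = g * w := by simp only [w, map_sub, hu, hv, mul_sub]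
  have hlow : ∀ n, ∀ m ≤ n, coeff m w = 0 := by
    intro n
    induction n with
    | zero => simp [w, h₀]
    | succ n ih =>
      intro m hm
      rcases Nat.lt_or_eq_of_le hm with hm | rfl
      · exact ih m (by omega)
      have hcoeff : coeff n (d⁄dX R w) = 0 := by
        rw [hw, coeff_mul]
        exact Finset.sum_eq_zero fun p hp =>
          by rw [ih p.2 (Finset.HasAntidiagonal.antidiagonal.snd_le hp), mul_zero]
      rw [coeff_derivative, ← Nat.cast_succ, ← nsmul_eq_mul'] at hcoeff
      exact (smul_eq_zero.mp hcoeff).resolve_left n.succ_ne_zero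
  ext n
  simpa using hlow n n le_rfl

theorem PowerSeries.sq_eq_of_one_sub_X_sq_mul_derivative {K : Type*} [Field K] [CharZero K]
    {f : K⟦X⟧} (hf : (1 - X ^ 2) * d⁄dX K f = f) (h₀ : constantCoeff f = 1) :
    f ^ 2 = (1 + X) * mk 1 := by
  set u := f ^ 2 * (1 - X)
  have hu : (1 + X) * d⁄dX K u = u := by
    simp only [u, Derivation.leibniz, derivative_pow, map_sub, derivative_one, derivative_X,
      smul_eq_mul]
    linear_combination (2 * f) * hf
  have h1X : constantCoeff (1 + X : K⟦X⟧) ≠ 0 := by simp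
  have hu₁ : u = 1 + X := by
    refine eq_of_derivative_eq_mul (g := (1 + X)⁻¹) ?_ ?_ (by simp [u, h₀])
    · conv_rhs => rw [← hu]
      rw [← mul_assoc, PowerSeries.inv_mul_cancel _ h1X, one_mul]
    · simp [PowerSeries.inv_mul_cancel _ h1X]
  calc f ^ 2 = u * mk 1 := by rw [mul_assoc, mul_comm (1 - X), mk_one_mul_one_sub_eq_one, mul_one]
    _ = (1 + X) * mk 1 := by rw [hu₁]

lemma coeff_egfP (n : ℕ) : coeff n egfP = permCount n / n.factorial :=
  coeff_mk _ _

lemma constantCoeff_egfP : constantCoeff egfP = 1 := by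
  simp [← coeff_zero_eq_constantCoeff_apply, coeff_egfP, permCount_zero]

lemma succ_mul_coeff_egfP_succ (n : ℕ) :
    (n + 1) * coeff (n + 1) egfP = (if Even n then n + 1 else n) * coeff n egfP := by
  rw [coeff_egfP, coeff_egfP, permCount_succ, Nat.factorial_succ]
  push_cast
  field_simp

lemma coeff_egfP_add_three (n : ℕ) :
    (n + 3) * coeff (n + 3) egfP = coeff (n + 2) egfP + (n + 1) * coeff (n + 1) egfP := by
  have h₃ := succ_mul_coeff_egfP_succ (n + 2)
  have h₂ := succ_mul_coeff_egfP_succ (n + 1)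
  rcases Nat.even_or_odd n with hn | hn
  · rw [if_pos (by simpa [Nat.even_add] using hn)] at h₃
    rw [if_neg (by simpa [Nat.even_add_one] using hn)] at h₂
    push_cast at h₃ h₂
    linear_combination h₃ + h₂
  · rw [if_neg (by simpa [Nat.even_add] using hn)] at h₃
    rw [if_pos (by simpa [Nat.even_add_one] using hn)] at h₂
    push_cast at h₃ h₂
    have h : coeff (n + 2) egfP = coeff (n + 1) egfP :=
      mul_left_cancel₀ (by positivity : (n : ℚ) + 1 + 1 ≠ 0) (by linear_combination h₂)
    linear_combination h₃ + (n + 1) * h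

lemma one_sub_X_sq_mul_derivative_egfP : (1 - X ^ 2) * d⁄dX ℚ egfP = egfP := by
  ext n
  rw [sub_mul, one_mul, map_sub, coeff_X_pow_mul']
  rcases n with _ | _ | n
  · simpa [coeff_derivative] using succ_mul_coeff_egfP_succ 0
  · simpa [coeff_derivative, mul_comm] using succ_mul_coeff_egfP_succ 1
  · simp only [coeff_derivative, le_add_iff_nonneg_left, zero_le, if_true]
    push_cast
    linear_combination coeff_egfP_add_three n

/-- `(∑ pₙ xⁿ/n!)² = (1+x)/(1-x)`, where `1/(1-x) = ∑ xⁿ`. -/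
theorem egfP_sq :
    egfP ^ 2 = (1 + PowerSeries.X) * PowerSeries.mk (fun _ => (1 : ℚ)) :=
  sq_eq_of_one_sub_X_sq_mul_derivative one_sub_X_sq_mul_derivative_egfP constantCoeff_egfP
end

section
/- For each ordered partition (A_1,...,A_k) of [n], the sets R^+ = {x ∈ ℝ^n : x_i > 0 for i ∈ A_j with j odd, x_i < 0 for i ∈ A_j with j even, |x_{i_1}| > |x_{i_2}| for i_1 ∈ A_j, i_2 ∈ A_{j+1}} and R^- = -R^+ are nonempty, open, and any point x ∈ ℝ^n with all x_i ≠ 0, all x_i + x_j ≠ 0 (i ≠ j), and all |x_i| distinct lies in R^+ or R^- for exactly one ordered partition of [n]. -/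
/-!
If `x ∈ R⁺(A₁, …, A_k)` then `x` is positive on `A₁`, every coordinate in `A₁` beats in absolute
value every later coordinate, and `-x ∈ R⁺(A₂, …, A_k)`. Hence `A₁` is forced: it consists of
the positive coordinates that beat every negative one in absolute value. Peeling it off and
passing to `-x` shows that `x` determines the partition; run forwards for a generic `x`, the same
recursion builds it, with `R⁺` or `R⁻` chosen by the sign of the coordinate of largest absolute
value. That sign also shows that `x` cannot lie in both an `R⁺` and an `R⁻`.
-/

/-- `L` is an ordered partition of `[n]`: a sequence of disjoint nonempty
subsets whose union is `[n]`. -/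
def IsOP (n : ℕ) (L : List (Finset (Fin n))) : Prop :=
  (∀ A ∈ L, A.Nonempty) ∧ L.Pairwise Disjoint ∧ L.foldr (· ∪ ·) ∅ = Finset.univ

/-- The region `R⁺` attached to an ordered partition `(A₁, …, A_k)`:
`xᵢ > 0` for `i` in odd-location (even 0-indexed) blocks, `xᵢ < 0` for `i` in
even-location blocks, and `|x_{i₁}| > |x_{i₂}|` for `i₁ ∈ Aⱼ`, `i₂ ∈ A_{j+1}`. -/
def Rplus (n : ℕ) (L : List (Finset (Fin n))) : Set (Fin n → ℝ) :=
  {x | ∀ j, (hj : j < L.length) →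
    (∀ i ∈ L[j]'hj, if Even j then 0 < x i else x i < 0) ∧
    ∀ (hj' : j + 1 < L.length), ∀ i₁ ∈ L[j]'hj, ∀ i₂ ∈ L[j + 1]'hj',
      |x i₂| < |x i₁|}

/-- The opposite region `R⁻ = -R⁺`. -/
def Rminus (n : ℕ) (L : List (Finset (Fin n))) : Set (Fin n → ℝ) :=
  {x | -x ∈ Rplus n L}

open Pointwise

section OrderedPartition

variable {α : Type*} [DecidableEq α]

theorem List.mem_foldr_union {L : List (Finset α)} {a : α} :
    a ∈ L.foldr (· ∪ ·) ∅ ↔ ∃ A ∈ L, a ∈ A := by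
  induction L with
  | nil => simp
  | cons B L ih => simp [ih]

theorem List.subset_foldr_union {L : List (Finset α)} {A : Finset α} (hA : A ∈ L) :
    A ⊆ L.foldr (· ∪ ·) ∅ :=
  fun _ ha ↦ List.mem_foldr_union.2 ⟨A, hA, ha⟩

theorem List.disjoint_foldr_union_right {A : Finset α} {L : List (Finset α)} :
    _root_.Disjoint A (L.foldr (· ∪ ·) ∅) ↔ ∀ B ∈ L, _root_.Disjoint A B := by
  induction L with
  | nil => simp
  | cons B L ih => simp [ih]

-- `IsOP n` is, definitionally, the case `S = univ`
def IsOPOf (S : Finset α) (L : List (Finset α)) : Prop :=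
  (∀ A ∈ L, A.Nonempty) ∧ L.Pairwise Disjoint ∧ L.foldr (· ∪ ·) ∅ = S

theorem isOPOf_nil_iff {S : Finset α} : IsOPOf S [] ↔ S = ∅ := by
  simp [IsOPOf, eq_comm]

theorem IsOPOf.eq_nil {L : List (Finset α)} (hL : IsOPOf ∅ L) : L = [] := by
  obtain ⟨hne, -, hU⟩ := hL
  refine List.eq_nil_iff_forall_not_mem.2 fun A hA ↦ ?_
  obtain ⟨a, ha⟩ := hne A hA
  simpa [hU] using List.subset_foldr_union hA ha

theorem isOPOf_cons_iff {S A : Finset α} {L : List (Finset α)} :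
    IsOPOf S (A :: L) ↔ A.Nonempty ∧ A ⊆ S ∧ IsOPOf (S \ A) L := by
  simp only [IsOPOf, List.forall_mem_cons, List.pairwise_cons, List.foldr_cons,
    ← List.disjoint_foldr_union_right]
  constructor
  · rintro ⟨⟨hA, hne⟩, ⟨hdisj, hpw⟩, rfl⟩
    exact ⟨hA, Finset.subset_union_left, hne, hpw, (hdisj.sdiff_eq_of_sup_eq rfl).symm⟩
  · rintro ⟨hA, hAS, hne, hpw, hU⟩
    exact ⟨⟨hA, hne⟩, ⟨hU ▸ Finset.disjoint_sdiff, hpw⟩,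
      hU ▸ Finset.union_sdiff_of_subset hAS⟩

end OrderedPartition

variable {n : ℕ} {x y : Fin n → ℝ} {S A : Finset (Fin n)} {L M : List (Finset (Fin n))}

@[simp] theorem Rplus_nil : Rplus n [] = Set.univ := by
  ext; simp [Rplus]

theorem mem_Rplus_cons :
    x ∈ Rplus n (A :: L) ↔ (∀ i ∈ A, 0 < x i) ∧
      (∀ B ∈ L.head?, ∀ i₁ ∈ A, ∀ i₂ ∈ B, |x i₂| < |x i₁|) ∧ -x ∈ Rplus n L := by
  simp only [Rplus, Set.mem_ofPred_eq, List.length_cons, Nat.forall_lt_succ_left']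
  cases L <;> simp [Nat.even_add_one, ite_not, -Nat.not_even_iff_odd, and_assoc]

theorem mem_Rplus_of_eqOn (hxy : ∀ B ∈ L, ∀ i ∈ B, x i = y i) (hx : x ∈ Rplus n L) :
    y ∈ Rplus n L := by
  intro j hj
  refine ⟨fun i hi ↦ ?_, fun hj' i₁ h₁ i₂ h₂ ↦ ?_⟩
  · rw [← hxy _ (List.getElem_mem hj) i hi]
    exact (hx j hj).1 i hi
  · rw [← hxy _ (List.getElem_mem hj) i₁ h₁, ← hxy _ (List.getElem_mem hj') i₂ h₂]
    exact (hx j hj).2 hj' i₁ h₁ i₂ h₂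

theorem isOpen_Rplus : ∀ L : List (Finset (Fin n)), IsOpen (Rplus n L)
  | [] => by simp
  | A :: L => by
    have hpos : IsOpen {x : Fin n → ℝ | ∀ i ∈ A, 0 < x i} := by
      simp only [Set.ofPred_forall]
      exact isOpen_biInter_finset fun i _ ↦ isOpen_lt continuous_const (continuous_apply i)
    have hdom :
        IsOpen {x : Fin n → ℝ | ∀ B ∈ L.head?, ∀ i₁ ∈ A, ∀ i₂ ∈ B, |x i₂| < |x i₁|} := by
      simp only [Set.ofPred_forall]
      exact isOpen_iInter_of_finite fun B ↦ isOpen_iInter_of_finite fun _ ↦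
        isOpen_biInter_finset fun i₁ _ ↦ isOpen_biInter_finset fun i₂ _ ↦
          isOpen_lt (continuous_apply i₂).abs (continuous_apply i₁).abs
    have hrest : IsOpen {x : Fin n → ℝ | -x ∈ Rplus n L} :=
      (isOpen_Rplus L).preimage continuous_neg
    rw [show Rplus n (A :: L) = _ ∩ (_ ∩ _) from Set.ext fun x ↦ mem_Rplus_cons]
    exact hpos.inter (hdom.inter hrest)

theorem Rplus_nonempty :
    ∀ {L : List (Finset (Fin n))}, L.Pairwise Disjoint → (Rplus n L).Nonempty
  | [], _ => by simp
  | A :: L, hAL => by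
    obtain ⟨hA, hL⟩ := List.pairwise_cons.1 hAL
    obtain ⟨y, hy⟩ := Rplus_nonempty hL
    have hnotA : ∀ B ∈ L, ∀ i ∈ B, i ∉ A := fun B hB i hi hiA ↦
      Finset.disjoint_left.1 (hA B hB) hiA hi
    -- the blocks of `L` carry `-y`, and `A` a value exceeding every `|y i|`
    set c := 1 + ∑ i, |y i|
    have hc : ∀ i, |y i| < c := fun i ↦ by
      have := Finset.single_le_sum (fun j _ ↦ abs_nonneg (y j)) (Finset.mem_univ i)
      linarith
    have hc0 : 0 < c := by positivity
    refine ⟨fun i ↦ if i ∈ A then c else -y i, mem_Rplus_cons.2 ⟨fun i hi ↦ ?_, ?_, ?_⟩⟩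
    · simpa [hi] using hc0
    · intro B hB i₁ h₁ i₂ h₂
      simpa [h₁, hnotA B (List.mem_of_mem_head? hB) i₂ h₂, abs_of_pos hc0] using hc i₂
    · exact mem_Rplus_of_eqOn (fun B hB i hi ↦ by simp [hnotA B hB i hi]) hy

theorem abs_lt_abs_of_mem_Rplus_cons (hne : ∀ B ∈ L, B.Nonempty) (hx : x ∈ Rplus n (A :: L))
    {i i' : Fin n} (hi : i ∈ A) (hi' : i' ∈ L.foldr (· ∪ ·) ∅) : |x i'| < |x i| := by
  induction L generalizing x A i with
  | nil => simp at hi'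
  | cons B L ih =>
    obtain ⟨-, hAB, hxL⟩ := mem_Rplus_cons.1 hx
    rcases Finset.mem_union.1 hi' with hi'B | hi'L
    · exact hAB B rfl i hi i' hi'B
    · obtain ⟨b, hb⟩ := hne B List.mem_cons_self
      have hbi' := ih (fun C hC ↦ hne C (List.mem_cons_of_mem B hC)) hxL hb hi'L
      simp only [Pi.neg_apply, abs_neg] at hbi'
      exact hbi'.trans (hAB B rfl i hi b hb)

noncomputable def leadingBlock (x : Fin n → ℝ) (S : Finset (Fin n)) : Finset (Fin n) :=
  S.filter fun i ↦ 0 < x i ∧ ∀ i' ∈ S, x i' < 0 → |x i'| < |x i|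

theorem leadingBlock_eq_of_mem_Rplus (hL : IsOPOf S (A :: L)) (hx : x ∈ Rplus n (A :: L)) :
    leadingBlock x S = A := by
  obtain ⟨hne, -, hS⟩ := hL
  obtain ⟨hApos, hAB, hxL⟩ := mem_Rplus_cons.1 hx
  have hLne : ∀ B ∈ L, B.Nonempty := fun B hB ↦ hne B (List.mem_cons_of_mem A hB)
  subst hS
  ext i
  simp only [leadingBlock, Finset.mem_filter, List.foldr_cons, Finset.mem_union]
  constructor
  · rintro ⟨hiAL | hiL, hipos, hidom⟩
    · exact hiAL
    · cases L with
      | nil => simp at hiL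
      | cons B M =>
        -- a positive `i` in the tail lies below the negative elements of `B`
        obtain ⟨b, hb⟩ := hLne B List.mem_cons_self
        have hbneg : x b < 0 := by
          simpa using (mem_Rplus_cons.1 hxL).1 b hb
        rcases Finset.mem_union.1 hiL with hiB | hiM
        · have := (mem_Rplus_cons.1 hxL).1 i hiB
          simp only [Pi.neg_apply, neg_pos] at this
          linarith
        · have hib := abs_lt_abs_of_mem_Rplus_cons
            (fun C hC ↦ hLne C (List.mem_cons_of_mem B hC)) hxL hb hiM
          simp only [Pi.neg_apply, abs_neg] at hib
          exact absurd (hidom b (Or.inr (Finset.mem_union_left _ hb)) hbneg) hib.not_gt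
  · intro hiA
    refine ⟨Or.inl hiA, hApos i hiA, fun i' hi' hi'neg ↦ ?_⟩
    rcases hi' with hi'A | hi'L
    · exact absurd (hApos i' hi'A) hi'neg.not_gt
    · exact abs_lt_abs_of_mem_Rplus_cons hLne hx hiA hi'L

theorem eq_of_mem_Rplus (hL : IsOPOf S L) (hM : IsOPOf S M) (hxL : x ∈ Rplus n L)
    (hxM : x ∈ Rplus n M) : L = M := by
  induction L generalizing x S M with
  | nil =>
    obtain rfl := isOPOf_nil_iff.1 hL
    exact hM.eq_nil.symm
  | cons A L ih =>
    cases M with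
    | nil =>
      obtain rfl := isOPOf_nil_iff.1 hM
      exact hL.eq_nil
    | cons B M =>
      obtain rfl : A = B :=
        (leadingBlock_eq_of_mem_Rplus hL hxL).symm.trans (leadingBlock_eq_of_mem_Rplus hM hxM)
      rw [ih (isOPOf_cons_iff.1 hL).2.2 (isOPOf_cons_iff.1 hM).2.2 (mem_Rplus_cons.1 hxL).2.2
        (mem_Rplus_cons.1 hxM).2.2]

theorem pos_of_mem_Rplus_of_isMax (hL : IsOPOf S L) (hx : x ∈ Rplus n L) {m : Fin n}
    (hm : m ∈ S) (hmax : ∀ i ∈ S, |x i| ≤ |x m|) : 0 < x m := by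
  cases L with
  | nil => simp [isOPOf_nil_iff.1 hL] at hm
  | cons A L =>
    obtain ⟨hne, -, rfl⟩ := hL
    obtain ⟨a, ha⟩ := hne A List.mem_cons_self
    rcases Finset.mem_union.1 hm with hmA | hmL
    · exact (mem_Rplus_cons.1 hx).1 m hmA
    · have := abs_lt_abs_of_mem_Rplus_cons
        (fun B hB ↦ hne B (List.mem_cons_of_mem A hB)) hx ha hmL
      exact absurd (hmax a (List.subset_foldr_union List.mem_cons_self ha)) this.not_ge

theorem eq_empty_of_mem_Rplus_of_mem_Rminus (hL : IsOPOf S L) (hM : IsOPOf S M)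
    (hxL : x ∈ Rplus n L) (hxM : x ∈ Rminus n M) : S = ∅ := by
  refine S.eq_empty_of_forall_notMem fun m hm ↦ ?_
  obtain ⟨k, hkS, hmax⟩ := S.exists_max_image (fun i ↦ |x i|) ⟨m, hm⟩
  have := pos_of_mem_Rplus_of_isMax hL hxL hkS hmax
  have := pos_of_mem_Rplus_of_isMax hM hxM hkS (by simpa only [Pi.neg_apply, abs_neg] using hmax)
  simp only [Pi.neg_apply, neg_pos] at this
  linarith

theorem eq_of_mem_Rplus_or_mem_Rminus (hL : IsOPOf S L) (hM : IsOPOf S M)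
    (hxL : x ∈ Rplus n L ∨ x ∈ Rminus n L) (hxM : x ∈ Rplus n M ∨ x ∈ Rminus n M) : L = M := by
  rcases hxL with hxL | hxL <;> rcases hxM with hxM | hxM
  · exact eq_of_mem_Rplus hL hM hxL hxM
  · obtain rfl := eq_empty_of_mem_Rplus_of_mem_Rminus hL hM hxL hxM
    exact hL.eq_nil.trans hM.eq_nil.symm
  · obtain rfl := eq_empty_of_mem_Rplus_of_mem_Rminus hM hL hxM hxL
    exact hL.eq_nil.trans hM.eq_nil.symm
  · exact eq_of_mem_Rplus hL hM hxL hxM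

-- `x` lies on no hyperplane of `H_n`
def IsGeneric (x : Fin n → ℝ) : Prop :=
  (∀ i, x i ≠ 0) ∧ ∀ i j, i ≠ j → x i + x j ≠ 0

theorem IsGeneric.neg (hx : IsGeneric x) : IsGeneric (-x) :=
  ⟨fun i ↦ by simpa using hx.1 i,
    fun i j hij ↦ by simpa only [Pi.neg_apply, ← neg_add, neg_ne_zero] using hx.2 i j hij⟩

theorem IsGeneric.abs_ne_abs_of_neg_of_pos (hx : IsGeneric x) {i j : Fin n} (hi : x i < 0)
    (hj : 0 < x j) : |x i| ≠ |x j| := by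
  have hij : i ≠ j := by
    rintro rfl
    linarith
  rw [abs_of_neg hi, abs_of_pos hj]
  intro h
  exact hx.2 i j hij (by linarith)

-- for generic `x` and nonempty `S`: the coordinate of largest absolute value on `S` is positive
def IsPositiveLed (x : Fin n → ℝ) (S : Finset (Fin n)) : Prop :=
  ∀ i ∈ S, x i < 0 → ∃ i' ∈ S, 0 < x i' ∧ |x i| < |x i'|

theorem isPositiveLed_or_isPositiveLed_neg (hx : IsGeneric x) :
    IsPositiveLed x S ∨ IsPositiveLed (-x) S := by
  refine or_iff_not_imp_left.2 fun h ↦ ?_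
  simp only [IsPositiveLed, not_forall, not_exists, not_and, not_lt] at h
  obtain ⟨i, hiS, hi, hdom⟩ := h
  refine fun j hjS hj ↦ ⟨i, hiS, by simpa using hi, ?_⟩
  simp only [Pi.neg_apply, neg_neg_iff_pos, abs_neg] at hj ⊢
  exact (hdom j hjS hj).lt_of_ne (hx.abs_ne_abs_of_neg_of_pos hi hj).symm

theorem leadingBlock_nonempty (hx : IsGeneric x) (hS : S.Nonempty) (hlead : IsPositiveLed x S) :
    (leadingBlock x S).Nonempty := by
  obtain ⟨m, hmS, hmax⟩ := S.exists_max_image (fun i ↦ |x i|) hS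
  have hm : 0 < x m := (hx.1 m).lt_or_gt.resolve_left fun hneg ↦ by
    obtain ⟨i', hi'S, -, hlt⟩ := hlead m hmS hneg
    exact (hmax i' hi'S).not_gt hlt
  exact ⟨m, Finset.mem_filter.2 ⟨hmS, hm, fun i' hi' hneg ↦
    (hmax i' hi').lt_of_ne (hx.abs_ne_abs_of_neg_of_pos hneg hm)⟩⟩

theorem exists_neg_of_mem_sdiff_leadingBlock (hx : IsGeneric x) {i : Fin n}
    (hi : i ∈ S \ leadingBlock x S) (hpos : 0 < x i) :
    ∃ i₀ ∈ S \ leadingBlock x S, x i₀ < 0 ∧ |x i| < |x i₀| := by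
  obtain ⟨hiS, hiA⟩ := Finset.mem_sdiff.1 hi
  have : ¬ ∀ i' ∈ S, x i' < 0 → |x i'| < |x i| := fun h ↦
    hiA (Finset.mem_filter.2 ⟨hiS, hpos, h⟩)
  push Not at this
  obtain ⟨i₀, hi₀S, hneg, hle⟩ := this
  have hi₀A : i₀ ∉ leadingBlock x S := fun h ↦ (Finset.mem_filter.1 h).2.1.not_gt hneg
  exact ⟨i₀, Finset.mem_sdiff.2 ⟨hi₀S, hi₀A⟩, hneg,
    hle.lt_of_ne (hx.abs_ne_abs_of_neg_of_pos hneg hpos).symm⟩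

theorem isPositiveLed_neg_sdiff_leadingBlock (hx : IsGeneric x) :
    IsPositiveLed (-x) (S \ leadingBlock x S) := by
  intro i hi hneg
  simp only [Pi.neg_apply, neg_neg_iff_pos] at hneg
  obtain ⟨i₀, hi₀, hi₀neg, hlt⟩ := exists_neg_of_mem_sdiff_leadingBlock hx hi hneg
  exact ⟨i₀, hi₀, by simpa using hi₀neg, by simpa only [Pi.neg_apply, abs_neg] using hlt⟩

theorem abs_lt_abs_of_mem_leadingBlock (hx : IsGeneric x) {i₁ i₂ : Fin n}
    (h₁ : i₁ ∈ leadingBlock x S) (h₂ : i₂ ∈ S \ leadingBlock x S) : |x i₂| < |x i₁| := by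
  obtain ⟨-, -, hdom⟩ := Finset.mem_filter.1 h₁
  rcases (hx.1 i₂).lt_or_gt with hneg | hpos
  · exact hdom i₂ (Finset.mem_sdiff.1 h₂).1 hneg
  · obtain ⟨i₀, hi₀, hi₀neg, hlt⟩ := exists_neg_of_mem_sdiff_leadingBlock hx h₂ hpos
    exact hlt.trans (hdom i₀ (Finset.mem_sdiff.1 hi₀).1 hi₀neg)

theorem exists_isOPOf_mem_Rplus (hx : IsGeneric x) (hlead : IsPositiveLed x S) :
    ∃ L, IsOPOf S L ∧ x ∈ Rplus n L := by
  induction S using Finset.strongInduction generalizing x with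
  | H S ih =>
  rcases S.eq_empty_or_nonempty with rfl | hS
  · exact ⟨[], isOPOf_nil_iff.2 rfl, by simp⟩
  have hA := leadingBlock_nonempty hx hS hlead
  obtain ⟨L, hL, hxL⟩ := ih (S \ leadingBlock x S)
    (Finset.sdiff_ssubset (Finset.filter_subset _ _) hA) hx.neg
    (isPositiveLed_neg_sdiff_leadingBlock hx)
  refine ⟨leadingBlock x S :: L, isOPOf_cons_iff.2 ⟨hA, Finset.filter_subset _ _, hL⟩,
    mem_Rplus_cons.2 ⟨fun i hi ↦ (Finset.mem_filter.1 hi).2.1, ?_, by simpa using hxL⟩⟩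
  intro B hB i₁ h₁ i₂ h₂
  have h₂' : i₂ ∈ S \ leadingBlock x S :=
    hL.2.2 ▸ List.subset_foldr_union (List.mem_of_mem_head? hB) h₂
  exact abs_lt_abs_of_mem_leadingBlock hx h₁ h₂'

theorem exists_isOPOf_mem_Rplus_or_mem_Rminus (hx : IsGeneric x) (S : Finset (Fin n)) :
    ∃ L, IsOPOf S L ∧ (x ∈ Rplus n L ∨ x ∈ Rminus n L) := by
  rcases isPositiveLed_or_isPositiveLed_neg hx (S := S) with hlead | hlead
  · obtain ⟨L, hL, hxL⟩ := exists_isOPOf_mem_Rplus hx hlead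
    exact ⟨L, hL, Or.inl hxL⟩
  · obtain ⟨L, hL, hxL⟩ := exists_isOPOf_mem_Rplus hx.neg hlead
    exact ⟨L, hL, Or.inr hxL⟩

/-- For every ordered partition of `[n]` the regions `R⁺` and `R⁻` are
nonempty and open, and every point generic for the arrangement `H_n` (all
`xᵢ ≠ 0`, all `xᵢ + xⱼ ≠ 0`) and for the ordering of the `|xᵢ|` lies in `R⁺`
or `R⁻` for exactly one ordered partition: a 2-to-1 correspondence from
regions to ordered partitions. -/
theorem two_to_one_correspondence (n : ℕ) :
    (∀ L : List (Finset (Fin n)), IsOP n L →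
      (Rplus n L).Nonempty ∧ IsOpen (Rplus n L) ∧
      (Rminus n L).Nonempty ∧ IsOpen (Rminus n L)) ∧
    (∀ x : Fin n → ℝ, (∀ i, x i ≠ 0) → (∀ i j, i ≠ j → x i + x j ≠ 0) →
      (∀ i j, i ≠ j → |x i| ≠ |x j|) →
      ∃! L : List (Finset (Fin n)),
        IsOP n L ∧ (x ∈ Rplus n L ∨ x ∈ Rminus n L)) := by
  refine ⟨fun L hL ↦ ?_, fun x hx₀ hadd _ ↦ ?_⟩
  · have hRminus : Rminus n L = -Rplus n L := rfl
    have hne := Rplus_nonempty hL.2.1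
    have hopen := isOpen_Rplus L
    exact ⟨hne, hopen, hRminus ▸ hne.neg, hRminus ▸ hopen.neg⟩
  · obtain ⟨L, hL, hxL⟩ := exists_isOPOf_mem_Rplus_or_mem_Rminus ⟨hx₀, hadd⟩ Finset.univ
    exact ⟨L, ⟨hL, hxL⟩, fun M hM ↦ eq_of_mem_Rplus_or_mem_Rminus hM.1 hL hM.2 hxL⟩
end
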